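/- arXiv:1408.3780 — 7 statements merged into one kernel-verified Lean document; each statement's English description precedes it below -/
import Mathlib

section
/- Let 0 < α ≤ 1, β = 2/α, and let b be a real number with 3/4 ≤ b ≤ 5/4. Then for every r > 0, b·β·((1+r)^α − 1)/(r·(1+r)^α) − 1/(1+r)^(α+1) ≥ b/(2·(1+r)^(α+1)). -/
/-- Coercivity estimate: for `0 < α ≤ 1`, `β = 2/α`, `3/4 ≤ b ≤ 5/4` and `r > 0`,
`b·β·((1+r)^α − 1)/(r·(1+r)^α) − 1/(1+r)^(α+1) ≥ b/(2·(1+r)^(α+1))`. -/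
theorem stmt_1 (α β b r : ℝ) (hα0 : 0 < α) (hα1 : α ≤ 1) (hβ : β = 2 / α)
    (hb1 : 3 / 4 ≤ b) (hb2 : b ≤ 5 / 4) (hr : 0 < r) :
    b * β * ((1 + r) ^ α - 1) / (r * (1 + r) ^ α) - 1 / (1 + r) ^ (α + 1)
      ≥ b / (2 * (1 + r) ^ (α + 1)) := by
  have hx : (0:ℝ) < 1 + r := by linarith
  set A := (1 + r) ^ α with hA
  have hApos : 0 < A := Real.rpow_pos_of_pos hx α
  have hA1 : 1 ≤ A := Real.one_le_rpow (by linarith) hα0.le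
  -- Bernoulli: (1 - r/(1+r))^α ≤ 1 - α * (r/(1+r))
  have hber := rpow_one_add_le_one_add_mul_self (s := -(r/(1+r)))
    (by have : r/(1+r) ≤ 1 := div_le_one_of_le₀ (by linarith) hx.le; linarith) hα0.le hα1
  have h1 : 1 + -(r/(1+r)) = (1+r)⁻¹ := by field_simp; ring
  rw [h1, Real.inv_rpow hx.le, ← hA] at hber
  -- turn into: α * r * A ≤ (1+r) * (A - 1)
  have hkey : α * r * A ≤ (1 + r) * (A - 1) := by
    have h2 : A⁻¹ ≤ 1 - α * (r / (1 + r)) := by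
      rw [show (1:ℝ) - α*(r/(1+r)) = 1 + α * -(r/(1+r)) by ring]; exact hber
    have h3 : 1 ≤ (1 - α * (r / (1 + r))) * A := by
      calc 1 = A⁻¹ * A := by field_simp
      _ ≤ _ := by nlinarith [mul_le_mul_of_nonneg_right h2 hApos.le]
    have h4 : α * (r / (1+r)) * A ≤ A - 1 := by nlinarith
    have h5 := mul_le_mul_of_nonneg_right h4 hx.le
    calc α * r * A = α * (r/(1+r)) * A * (1+r) := by field_simp
    _ ≤ (A - 1) * (1 + r) := h5
    _ = (1 + r) * (A - 1) := by ring
  have hpow : (1 + r) ^ (α + 1) = A * (1 + r) := by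
    rw [Real.rpow_add hx, Real.rpow_one, hA]
  rw [hpow, hβ, ge_iff_le, ← sub_nonneg]
  have hαne : α ≠ 0 := hα0.ne'
  rw [show b * (2 / α) * (A - 1) / (r * A) - 1 / (A * (1 + r)) - b / (2 * (A * (1 + r)))
      = (4 * b * ((1+r) * (A - 1)) - 2 * (α * r) - α * r * b) / (2 * α * r * A * (1+r)) by
    field_simp; ring]
  apply div_nonneg _ (by positivity)
  nlinarith [mul_le_mul_of_nonneg_left hkey (by linarith : (0:ℝ) ≤ 4 * b),
    mul_nonneg (mul_nonneg (mul_nonneg (by linarith : (0:ℝ) ≤ 4 * b) hα0.le) hr.le)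
      (by linarith : (0:ℝ) ≤ A - 1), mul_pos hα0 hr]
end

section
/- Let 0 < α and β > 0, define f(r) = β(1 − (1+r)^(−α)) and Θ(r) = f(r)/r for r > 0. If β·α = 2, then for all r > 0, −(Θ''(r) + (2/r)·Θ'(r)) = 2(α+1)/(r·(1+r)^(α+2)). -/
set_option maxHeartbeats 1000000 in
private lemma helper (c p : ℝ) (n : ℤ) (x : ℝ) (hx : x ≠ 0) (h1x : (0:ℝ) < 1 + x) :
    HasDerivAt (fun y : ℝ => c * ((1 + y) ^ p * y ^ n))
      (c * (p * (1 + x) ^ (p - 1) * x ^ n + (1 + x) ^ p * ((n : ℝ) * x ^ (n - 1)))) x := by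
  have h1 : HasDerivAt (fun y : ℝ => (1 + y) ^ p) (p * (1 + x) ^ (p - 1)) x := by
    have := (Real.hasDerivAt_rpow_const (x := 1 + x) (p := p) (Or.inl h1x.ne')).comp x
      ((hasDerivAt_id x).const_add 1)
    simpa [Function.comp_def] using this
  have h2 : HasDerivAt (fun y : ℝ => y ^ n) ((n : ℝ) * x ^ (n - 1)) x :=
    hasDerivAt_zpow n x (Or.inl hx)
  exact (h1.mul h2).const_mul c

noncomputable def D1f (α β : ℝ) : ℝ → ℝ := fun x =>
  (-β) * ((1 + x) ^ (0:ℝ) * x ^ (-2:ℤ)) + (β * α) * ((1 + x) ^ (-α - 1) * x ^ (-1:ℤ))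
    + β * ((1 + x) ^ (-α) * x ^ (-2:ℤ))

noncomputable def D2f (α β : ℝ) : ℝ → ℝ := fun x =>
  (-β) * ((0:ℝ) * (1 + x) ^ ((0:ℝ) - 1) * x ^ (-2:ℤ)
      + (1 + x) ^ (0:ℝ) * (((-2:ℤ) : ℝ) * x ^ ((-2:ℤ) - 1)))
  + (β * α) * ((-α - 1) * (1 + x) ^ (-α - 1 - 1) * x ^ (-1:ℤ)
      + (1 + x) ^ (-α - 1) * (((-1:ℤ) : ℝ) * x ^ ((-1:ℤ) - 1)))
  + β * ((-α) * (1 + x) ^ (-α - 1) * x ^ (-2:ℤ)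
      + (1 + x) ^ (-α) * (((-2:ℤ) : ℝ) * x ^ ((-2:ℤ) - 1)))

set_option maxHeartbeats 1000000 in
/-- For `f(r) = β(1 − (1+r)^(−α))`, `Θ(r) = f(r)/r`, with `β·α = 2`:
`−(Θ''(r) + (2/r)·Θ'(r)) = 2(α+1)/(r·(1+r)^(α+2))` for `r > 0`. -/
theorem stmt_2 (α β : ℝ) (hα : 0 < α) (hβ : 0 < β) (hβα : β * α = 2)
    (f Θ : ℝ → ℝ)
    (hf : ∀ r : ℝ, f r = β * (1 - (1 + r) ^ (-α)))
    (hΘ : ∀ r : ℝ, Θ r = f r / r)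
    (r : ℝ) (hr : 0 < r) :
    -(deriv (deriv Θ) r + (2 / r) * deriv Θ r)
      = 2 * (α + 1) / (r * (1 + r) ^ (α + 2)) := by
  have hΘf : Θ = fun y : ℝ => β * (1 - (1 + y) ^ (-α)) / y := funext fun y => by
    rw [hΘ, hf]
  have hz1 : ∀ x : ℝ, x ^ (-1:ℤ) = x⁻¹ := fun x => by norm_num
  have hz2 : ∀ x : ℝ, x ^ (-2:ℤ) = (x ^ 2)⁻¹ := fun x => by
    rw [zpow_neg]; norm_num
  have hz21 : ∀ x : ℝ, x ^ ((-2:ℤ) - 1) = (x ^ 3)⁻¹ := fun x => by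
    norm_num <;> rfl
  have hz11 : ∀ x : ℝ, x ^ ((-1:ℤ) - 1) = (x ^ 2)⁻¹ := fun x => by
    norm_num <;> rfl
  have loc1 : ∀ x : ℝ, 0 < x → HasDerivAt Θ (D1f α β x) x := by
    intro x hx
    have hx0 : x ≠ 0 := hx.ne'
    have h1x : (0:ℝ) < 1 + x := by linarith
    have hpow : HasDerivAt (fun y : ℝ => (1 + y) ^ (-α)) (-α * (1 + x) ^ (-α - 1)) x := by
      have := (Real.hasDerivAt_rpow_const (x := 1 + x) (p := -α) (Or.inl h1x.ne')).comp x
        ((hasDerivAt_id x).const_add 1)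
      simpa [Function.comp_def] using this
    have h : HasDerivAt (fun y : ℝ => β * (1 - (1 + y) ^ (-α)) / y) _ x := ((hpow.const_sub 1).const_mul β).div (hasDerivAt_id x) hx0
    rw [hΘf]
    convert h using 1
    have hA : (1 + x) ^ (-α - 1) = (1 + x) ^ (-α) / (1 + x) :=
      Real.rpow_sub_one h1x.ne' _
    simp only [D1f, Real.rpow_zero, hz1, hz2, hA, id_eq]
    field_simp
    ring
  have h1r : (0:ℝ) < 1 + r := by linarith
  have loc2 : HasDerivAt (D1f α β) (D2f α β r) r :=
    ((helper (-β) 0 (-2) r hr.ne' h1r).add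
      (helper (β * α) (-α - 1) (-1) r hr.ne' h1r)).add
      (helper β (-α) (-2) r hr.ne' h1r)
  have hev : deriv Θ =ᶠ[nhds r] D1f α β := by
    filter_upwards [Ioi_mem_nhds hr] with x hx
    exact (loc1 x hx).deriv
  rw [hev.deriv_eq, loc2.deriv, (loc1 r hr).deriv]
  have hP : (0:ℝ) < (1 + r) ^ α := Real.rpow_pos_of_pos h1r α
  have hneg : (1 + r) ^ (-α) = ((1 + r) ^ α)⁻¹ := Real.rpow_neg h1r.le α
  have hA1 : (1 + r) ^ (-α - 1) = (1 + r) ^ (-α) / (1 + r) := Real.rpow_sub_one h1r.ne' _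
  have hA2 : (1 + r) ^ (-α - 1 - 1) = (1 + r) ^ (-α - 1) / (1 + r) := Real.rpow_sub_one h1r.ne' _
  have hB : (1 + r) ^ (α + 2) = (1 + r) ^ α * (1 + r) ^ 2 := by
    rw [Real.rpow_add h1r]
    norm_num [Real.rpow_two, Real.rpow_natCast]
  simp only [D1f, D2f, Real.rpow_zero, hA2, hA1, hneg, hB, hz1, hz2, hz21, hz11]
  have hr0 : r ≠ 0 := hr.ne'
  have hβ2 : β = 2 / α := by field_simp; linarith [hβα]
  rw [hβ2]
  field_simp
  ring
end

section
/- Let F : ℝ → ℝ be a nonnegative measurable function, let B > 0, ρ ≥ 4, and c ≥ 1, and suppose that the integral of F over the interval [c, ρc] is at most B. Then there exists τ ∈ [c, ρc] such that F(τ) ≤ (4B / log ρ) · (1+τ)^(−1). -/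
open MeasureTheory

/-- Averaging lemma: if a nonnegative measurable `F` has integral at most `B` over
`[c, ρc]` (with `B > 0`, `ρ ≥ 4`, `c ≥ 1`), then there is `τ ∈ [c, ρc]` with
`F(τ) ≤ (4B / log ρ)·(1+τ)⁻¹`. -/
theorem stmt_3 (F : ℝ → ℝ) (hFmeas : Measurable F) (hFpos : ∀ t, 0 ≤ F t)
    (B ρ c : ℝ) (hB : 0 < B) (hρ : 4 ≤ ρ) (hc : 1 ≤ c)
    (hint : ∫⁻ t in Set.Icc c (ρ * c), ENNReal.ofReal (F t) ≤ ENNReal.ofReal B) :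
    ∃ τ ∈ Set.Icc c (ρ * c), F τ ≤ 4 * B / Real.log ρ * (1 + τ)⁻¹ := by
  by_contra h
  push_neg at h
  have hρ1 : (1:ℝ) < ρ := by linarith
  have hlogρ : 0 < Real.log ρ := Real.log_pos hρ1
  set M : ℝ := 4 * B / Real.log ρ with hM
  have hMpos : 0 < M := by positivity
  have hcle : c ≤ ρ * c := by nlinarith
  set g : ℝ → ℝ := fun t => M * (1 + t)⁻¹ with hg
  -- g is nonneg and continuous on the interval
  have hgcont : ContinuousOn g (Set.Icc c (ρ * c)) := by
    apply ContinuousOn.mul continuousOn_const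
    apply ContinuousOn.inv₀ (by fun_prop)
    intro x hx
    have := hx.1
    nlinarith
  have hgInt : IntegrableOn g (Set.Icc c (ρ * c)) := hgcont.integrableOn_Icc
  have hgnn : 0 ≤ᵐ[volume.restrict (Set.Icc c (ρ * c))] g := by
    filter_upwards [ae_restrict_mem measurableSet_Icc] with x hx
    have : (0:ℝ) ≤ 1 + x := by nlinarith [hx.1]
    positivity
  have key : ENNReal.ofReal (∫ t in Set.Icc c (ρ * c), g t) ≤ ENNReal.ofReal B := by
    rw [ofReal_integral_eq_lintegral_ofReal hgInt hgnn]
    refine le_trans (lintegral_mono_ae ?_) hint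
    filter_upwards [ae_restrict_mem measurableSet_Icc] with x hx
    exact ENNReal.ofReal_le_ofReal (h x hx).le
  have hB' : ∫ t in Set.Icc c (ρ * c), g t ≤ B :=
    (ENNReal.ofReal_le_ofReal_iff hB.le).mp key
  -- compute the integral
  have h1c : (0:ℝ) < 1 + c := by linarith
  have h1ρc : (0:ℝ) < 1 + ρ * c := by nlinarith
  have hcomp : ∫ t in Set.Icc c (ρ * c), g t
      = M * (Real.log (1 + ρ * c) - Real.log (1 + c)) := by
    rw [MeasureTheory.integral_Icc_eq_integral_Ioc, ← intervalIntegral.integral_of_le hcle]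
    have : ∫ t in c..(ρ * c), g t = M * ∫ t in c..(ρ * c), (1 + t)⁻¹ := by
      simp [hg, intervalIntegral.integral_const_mul]
    rw [this]
    congr 1
    have h2 : ∫ t in c..(ρ * c), (1 + t)⁻¹
        = ∫ t in (1 + c)..(1 + ρ * c), t⁻¹ := by
      simpa using intervalIntegral.integral_comp_add_left (fun x => x⁻¹) 1
    rw [h2, integral_inv (by
      rw [Set.uIcc_of_le (by linarith)]
      intro h0
      exact absurd h0.1 (by linarith)),
      Real.log_div (by linarith) (by linarith)]
  -- the contradiction: M * (log(1+ρc) - log(1+c)) > B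
  have hratio : Real.log ρ / 4 < Real.log (1 + ρ * c) - Real.log (1 + c) := by
    have hge : Real.log (ρ / 2) ≤ Real.log (1 + ρ * c) - Real.log (1 + c) := by
      rw [← Real.log_div (by linarith) (by linarith)]
      apply Real.log_le_log (by positivity)
      rw [div_le_div_iff₀ (by norm_num) h1c]
      nlinarith
    have hρ2 : Real.log (ρ / 2) = Real.log ρ - Real.log 2 :=
      Real.log_div (by linarith) (by norm_num)
    have h4 : Real.log 4 ≤ Real.log ρ := Real.log_le_log (by norm_num) hρ
    have h42 : Real.log 4 = 2 * Real.log 2 := by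
      rw [show (4:ℝ) = 2 ^ 2 by norm_num, Real.log_pow]; ring
    have hl2 : 0 < Real.log 2 := Real.log_pos (by norm_num)
    nlinarith
  have : B < M * (Real.log (1 + ρ * c) - Real.log (1 + c)) := by
    have hMeq : M * (Real.log ρ / 4) = B := by
      field_simp [hM]
      rw [hM, div_mul_cancel₀ _ hlogρ.ne']
    nlinarith
  rw [hcomp] at hB'
  linarith
end

section
/- Let c₂ ≥ c₁ > 1, C > 0, M > 0, and let (τ_n) be a sequence of reals with τ₀ ≥ 1 and c₁·τ_n ≤ τ_{n+1} ≤ c₂·τ_n for all n. Let (a_n) be a sequence of nonnegative reals with a_n ≤ M for all n, and suppose (τ_{n+1} − τ_n)·a_{n+1} ≤ C·(τ_n^(−1) + a_n) for all n. Then there exists a constant C' > 0, depending only on c₁, c₂, C, M, τ₀, such that a_n ≤ C'·τ_n^(−2) for all n. -/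
/-- Abstract two-step bootstrap iteration yielding quadratic decay `a_n ≤ C'·τ_n⁻²`. -/
theorem stmt_4 (c₁ c₂ C M : ℝ) (τ a : ℕ → ℝ)
    (hc1 : 1 < c₁) (hc12 : c₁ ≤ c₂) (hC : 0 < C) (hM : 0 < M)
    (hτ0 : 1 ≤ τ 0)
    (hτ : ∀ n, c₁ * τ n ≤ τ (n + 1) ∧ τ (n + 1) ≤ c₂ * τ n)
    (ha0 : ∀ n, 0 ≤ a n) (haM : ∀ n, a n ≤ M)
    (hrec : ∀ n, (τ (n + 1) - τ n) * a (n + 1) ≤ C * ((τ n)⁻¹ + a n)) :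
    ∃ C' > 0, ∀ n, a n ≤ C' * ((τ n)⁻¹) ^ 2 := by
  have hc0 : 0 < c₁ - 1 := by linarith
  have hc2 : 0 < c₂ := by linarith
  have hτ1 : ∀ n, 1 ≤ τ n := by
    intro n
    induction n with
    | zero => exact hτ0
    | succ n ih =>
      have h := (hτ n).1
      nlinarith
  have hτpos : ∀ n, 0 < τ n := fun n => lt_of_lt_of_le zero_lt_one (hτ1 n)
  have hinv1 : ∀ n, (τ n)⁻¹ ≤ 1 := fun n => inv_le_one_of_one_le₀ (hτ1 n)
  have hinvpos : ∀ n, 0 < (τ n)⁻¹ := fun n => inv_pos.mpr (hτpos n)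
  have stepA : ∀ n, (c₁ - 1) * τ n * a (n + 1) ≤ C * ((τ n)⁻¹ + a n) := by
    intro n
    have h1 : (c₁ - 1) * τ n ≤ τ (n + 1) - τ n := by have := (hτ n).1; linarith
    calc (c₁ - 1) * τ n * a (n + 1) ≤ (τ (n + 1) - τ n) * a (n + 1) :=
          mul_le_mul_of_nonneg_right h1 (ha0 _)
      _ ≤ C * ((τ n)⁻¹ + a n) := hrec n
  have hinvc : ∀ n, (τ n)⁻¹ ≤ c₂ * (τ (n + 1))⁻¹ := by
    intro n
    have h2 := (hτ n).2
    rw [← div_eq_mul_inv, le_div_iff₀ (hτpos (n + 1))]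
    calc (τ n)⁻¹ * τ (n + 1) ≤ (τ n)⁻¹ * (c₂ * τ n) :=
          mul_le_mul_of_nonneg_left h2 (hinvpos n).le
      _ = c₂ * ((τ n)⁻¹ * τ n) := by ring
      _ = c₂ := by rw [inv_mul_cancel₀ (hτpos n).ne']; ring
  have key : ∀ n B, C * ((τ n)⁻¹ + a n) ≤ B → a (n + 1) ≤ B / (c₁ - 1) * (τ n)⁻¹ := by
    intro n B hB
    have heq : B / (c₁ - 1) * (τ n)⁻¹ = B / ((c₁ - 1) * τ n) := by
      field_simp
    rw [heq, le_div_iff₀ (mul_pos hc0 (hτpos n))]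
    calc a (n + 1) * ((c₁ - 1) * τ n) = (c₁ - 1) * τ n * a (n + 1) := by ring
      _ ≤ C * ((τ n)⁻¹ + a n) := stepA n
      _ ≤ B := hB
  set K₁ : ℝ := C * (1 + M) / (c₁ - 1) with hK₁def
  have hK₁ : 0 < K₁ := div_pos (by nlinarith) hc0
  have step1 : ∀ n, a (n + 1) ≤ K₁ * c₂ * (τ (n + 1))⁻¹ := by
    intro n
    have hb : C * ((τ n)⁻¹ + a n) ≤ C * (1 + M) := by
      have h1 := hinv1 n
      have h2 := haM n
      nlinarith
    have h := key n (C * (1 + M)) hb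
    calc a (n + 1) ≤ K₁ * (τ n)⁻¹ := h
      _ ≤ K₁ * (c₂ * (τ (n + 1))⁻¹) := mul_le_mul_of_nonneg_left (hinvc n) hK₁.le
      _ = K₁ * c₂ * (τ (n + 1))⁻¹ := by ring
  set K : ℝ := max (K₁ * c₂) (M * τ 0) with hKdef
  have hKpos : 0 < K := lt_of_lt_of_le (mul_pos hK₁ hc2) (le_max_left _ _)
  have step1' : ∀ n, a n ≤ K * (τ n)⁻¹ := by
    intro n
    cases n with
    | zero =>
      calc a 0 ≤ M := haM 0
        _ = M * τ 0 * (τ 0)⁻¹ := by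
            rw [mul_assoc, mul_inv_cancel₀ (hτpos 0).ne', mul_one]
        _ ≤ K * (τ 0)⁻¹ := mul_le_mul_of_nonneg_right (le_max_right _ _) (hinvpos 0).le
    | succ n =>
      exact le_trans (step1 n)
        (mul_le_mul_of_nonneg_right (le_max_left _ _) (hinvpos _).le)
  refine ⟨max (C * (1 + K) / (c₁ - 1) * c₂ ^ 2) (M * (τ 0) ^ 2), ?_, ?_⟩
  · exact lt_of_lt_of_le (by positivity) (le_max_right _ _)
  · intro n
    cases n with
    | zero =>
      calc a 0 ≤ M := haM 0
        _ = M * (τ 0) ^ 2 * ((τ 0)⁻¹) ^ 2 := by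
            field_simp
        _ ≤ max (C * (1 + K) / (c₁ - 1) * c₂ ^ 2) (M * (τ 0) ^ 2) * ((τ 0)⁻¹) ^ 2 :=
            mul_le_mul_of_nonneg_right (le_max_right _ _) (by positivity)
    | succ n =>
      have hb : C * ((τ n)⁻¹ + a n) ≤ C * (1 + K) * (τ n)⁻¹ := by
        have h1 := step1' n
        nlinarith [hinvpos n]
      have h := key n (C * (1 + K) * (τ n)⁻¹) hb
      have hsq : ((τ n)⁻¹) ^ 2 ≤ (c₂ * (τ (n + 1))⁻¹) ^ 2 :=
        pow_le_pow_left₀ (hinvpos n).le (hinvc n) 2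
      calc a (n + 1) ≤ C * (1 + K) * (τ n)⁻¹ / (c₁ - 1) * (τ n)⁻¹ := h
        _ = C * (1 + K) / (c₁ - 1) * ((τ n)⁻¹) ^ 2 := by ring
        _ ≤ C * (1 + K) / (c₁ - 1) * (c₂ * (τ (n + 1))⁻¹) ^ 2 := by
            apply mul_le_mul_of_nonneg_left hsq
            positivity
        _ = C * (1 + K) / (c₁ - 1) * c₂ ^ 2 * ((τ (n + 1))⁻¹) ^ 2 := by ring
        _ ≤ max (C * (1 + K) / (c₁ - 1) * c₂ ^ 2) (M * (τ 0) ^ 2) * ((τ (n + 1))⁻¹) ^ 2 :=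
            mul_le_mul_of_nonneg_right (le_max_left _ _) (by positivity)
end

section
/- Let u ≤ a < b and let ψ : [a, b] → ℝ be continuously differentiable. Then ∫_a^b ψ(t)² dt ≤ 2·(b − u)·ψ(b)² + 4·∫_a^b (t − u)²·ψ'(t)² dt. -/
/-- If `u ≤ a < b` and `ψ ∈ C¹([a, b])`, then
`∫_a^b ψ² ≤ 2(b − u)ψ(b)² + 4∫_a^b (t − u)²ψ'(t)² dt`. -/
theorem stmt_12 (u a b : ℝ) (hua : u ≤ a) (hab : a < b) (ψ ψ' : ℝ → ℝ)
    (hψ : ∀ t ∈ Set.Icc a b, HasDerivWithinAt ψ (ψ' t) (Set.Icc a b) t)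
    (hψ'c : ContinuousOn ψ' (Set.Icc a b)) :
    ∫ t in a..b, ψ t ^ 2
      ≤ 2 * (b - u) * ψ b ^ 2 + 4 * ∫ t in a..b, (t - u) ^ 2 * ψ' t ^ 2 := by
  have hab' : a ≤ b := hab.le
  have hIcc : Set.uIcc a b = Set.Icc a b := Set.uIcc_of_le hab'
  have hψc : ContinuousOn ψ (Set.Icc a b) := fun t ht => (hψ t ht).continuousWithinAt
  set F : ℝ → ℝ := fun t => (t - u) * ψ t ^ 2 with hFdef
  set g : ℝ → ℝ := fun t => ψ t ^ 2 + 2 * (t - u) * (ψ t * ψ' t) with hgdef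
  have hF : ∀ t ∈ Set.Icc a b, HasDerivWithinAt F (g t) (Set.Icc a b) t := by
    intro t ht
    have h1 : HasDerivWithinAt (fun t => t - u) 1 (Set.Icc a b) t :=
      ((hasDerivAt_id t).sub_const u).hasDerivWithinAt
    have h2 : HasDerivWithinAt (fun t => ψ t ^ 2) (2 * ψ t * ψ' t) (Set.Icc a b) t := by
      have := (hψ t ht).fun_pow 2
      simpa [mul_comm, mul_assoc, mul_left_comm] using this
    have := h1.fun_mul h2
    convert this using 1
    · rfl
    · rfl
    simp [hgdef]; ring
  have hFc : ContinuousOn F (Set.Icc a b) := fun t ht => (hF t ht).continuousWithinAt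
  have hcont_tm : ContinuousOn (fun t : ℝ => t - u) (Set.Icc a b) :=
    (continuous_id.sub continuous_const).continuousOn
  have hψ2 : IntervalIntegrable (fun t => ψ t ^ 2) MeasureTheory.volume a b := by
    apply ContinuousOn.intervalIntegrable; rw [hIcc]; exact hψc.pow 2
  have hh : IntervalIntegrable (fun t => 2 * (t - u) * (ψ t * ψ' t))
      MeasureTheory.volume a b := by
    apply ContinuousOn.intervalIntegrable; rw [hIcc]
    exact ((continuousOn_const.mul hcont_tm).mul (hψc.mul hψ'c))
  have hk : IntervalIntegrable (fun t => (t - u) ^ 2 * ψ' t ^ 2)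
      MeasureTheory.volume a b := by
    apply ContinuousOn.intervalIntegrable; rw [hIcc]
    exact (hcont_tm.pow 2).mul (hψ'c.pow 2)
  have hgint : IntervalIntegrable g MeasureTheory.volume a b := hψ2.add hh
  have hFTC : ∫ t in a..b, g t = F b - F a := by
    apply intervalIntegral.integral_eq_sub_of_hasDeriv_right_of_le hab' hFc _ hgint
    intro x hx
    exact ((hF x (Set.Ioo_subset_Icc_self hx)).hasDerivAt
      (Icc_mem_nhds hx.1 hx.2)).hasDerivWithinAt
  have hsplit : (∫ t in a..b, g t)
      = (∫ t in a..b, ψ t ^ 2) + ∫ t in a..b, 2 * (t - u) * (ψ t * ψ' t) :=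
    intervalIntegral.integral_add hψ2 hh
  -- pointwise bound: -(2(t-u)ψψ') ≤ ψ²/2 + 2(t-u)²ψ'²
  have hmono : (∫ t in a..b, -(2 * (t - u) * (ψ t * ψ' t)))
      ≤ ∫ t in a..b, (ψ t ^ 2 / 2 + 2 * ((t - u) ^ 2 * ψ' t ^ 2)) := by
    apply intervalIntegral.integral_mono_on hab' hh.neg
      ((hψ2.div_const 2).add (hk.const_mul 2))
    intro t ht
    simp only [Pi.neg_apply]
    nlinarith [sq_nonneg (ψ t + 2 * ((t - u) * ψ' t)), sq_nonneg (ψ t - 2 * ((t - u) * ψ' t))]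
  have hrhs : (∫ t in a..b, (ψ t ^ 2 / 2 + 2 * ((t - u) ^ 2 * ψ' t ^ 2)))
      = (∫ t in a..b, ψ t ^ 2) / 2 + 2 * ∫ t in a..b, (t - u) ^ 2 * ψ' t ^ 2 := by
    rw [intervalIntegral.integral_add (hψ2.div_const 2) (hk.const_mul 2),
      intervalIntegral.integral_div, intervalIntegral.integral_const_mul]
  rw [intervalIntegral.integral_neg, hrhs] at hmono
  have hFa : 0 ≤ F a := mul_nonneg (by linarith) (sq_nonneg _)
  have hFb : F b = (b - u) * ψ b ^ 2 := rfl
  have h2xy : (∫ t in a..b, 2 * (t - u) * (ψ t * ψ' t))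
      = F b - F a - ∫ t in a..b, ψ t ^ 2 := by rw [← hFTC, hsplit]; ring
  rw [h2xy] at hmono
  rw [hFb] at hmono
  linarith
end

section
/- Let u < T and let F : (u, T] → ℝ be continuously differentiable with (t − u)·F(t)² → 0 as t → u⁺. Then for every t ∈ (u, T], (t − u)·F(t)² ≤ ∫_u^t F(s)² ds + 2·( ∫_u^t (s − u)²·F'(s)² ds )^{1/2} · ( ∫_u^t F(s)² ds )^{1/2}. -/
open MeasureTheory intervalIntegral

/-- Cauchy–Schwarz for interval integrals of continuous functions. -/
lemma cs_interval {f g : ℝ → ℝ} {a b : ℝ} (hab : a ≤ b)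
    (hf : ContinuousOn f (Set.Icc a b)) (hg : ContinuousOn g (Set.Icc a b)) :
    (∫ s in a..b, f s * g s)
      ≤ Real.sqrt (∫ s in a..b, f s ^ 2) * Real.sqrt (∫ s in a..b, g s ^ 2) := by
  have hUIcc : Set.uIcc a b = Set.Icc a b := Set.uIcc_of_le hab
  have hif : IntervalIntegrable (fun s => f s ^ 2) volume a b :=
    ContinuousOn.intervalIntegrable (by rw [hUIcc]; exact hf.pow 2)
  have hig : IntervalIntegrable (fun s => g s ^ 2) volume a b :=
    ContinuousOn.intervalIntegrable (by rw [hUIcc]; exact hg.pow 2)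
  have hifg : IntervalIntegrable (fun s => f s * g s) volume a b :=
    ContinuousOn.intervalIntegrable (by rw [hUIcc]; exact hf.mul hg)
  set A := ∫ s in a..b, f s ^ 2 with hA
  set B := ∫ s in a..b, g s ^ 2 with hB
  set C := ∫ s in a..b, f s * g s with hC
  have hA0 : 0 ≤ A := intervalIntegral.integral_nonneg hab (fun s _ => sq_nonneg _)
  have hB0 : 0 ≤ B := intervalIntegral.integral_nonneg hab (fun s _ => sq_nonneg _)
  have key : C ^ 2 ≤ A * B := by
    have h : ∀ x : ℝ, 0 ≤ A * (x * x) + (2 * C) * x + B := by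
      intro x
      have hexp : (∫ s in a..b, (x * f s + g s) ^ 2) = A * (x * x) + (2 * C) * x + B := by
        have : ∀ s, (x * f s + g s) ^ 2
            = (x * x) * f s ^ 2 + (2 * x) * (f s * g s) + g s ^ 2 := by
          intro s; ring
        simp_rw [this]
        rw [intervalIntegral.integral_add ((hif.const_mul (x*x)).add (hifg.const_mul (2*x))) hig,
            intervalIntegral.integral_add (hif.const_mul (x*x)) (hifg.const_mul (2*x)),
            intervalIntegral.integral_const_mul, intervalIntegral.integral_const_mul]
        simp only [← hA, ← hB, ← hC]
        ring
      rw [← hexp]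
      exact intervalIntegral.integral_nonneg hab (fun s _ => sq_nonneg _)
    have := discrim_le_zero h
    rw [discrim] at this
    nlinarith
  calc C ≤ |C| := le_abs_self C
    _ = Real.sqrt (C ^ 2) := (Real.sqrt_sq_eq_abs C).symm
    _ ≤ Real.sqrt (A * B) := Real.sqrt_le_sqrt key
    _ = Real.sqrt A * Real.sqrt B := Real.sqrt_mul hA0 B

/-- Weighted trace inequality: if `F ∈ C¹((u, T])` with `(t − u)F(t)² → 0` as `t → u⁺`
and the relevant integrals are finite, then for all `t ∈ (u, T]`,
`(t − u)F(t)² ≤ ∫_u^t F² + 2(∫_u^t (s−u)²F'²)^{1/2}(∫_u^t F²)^{1/2}`. -/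
theorem stmt_13 (u T : ℝ) (huT : u < T) (F F' : ℝ → ℝ)
    (hF : ∀ t ∈ Set.Ioc u T, HasDerivAt F (F' t) t)
    (hF'c : ContinuousOn F' (Set.Ioc u T))
    (hint1 : IntervalIntegrable (fun s => F s ^ 2) MeasureTheory.volume u T)
    (hint2 : IntervalIntegrable (fun s => (s - u) ^ 2 * F' s ^ 2) MeasureTheory.volume u T)
    (hlim : Filter.Tendsto (fun t => (t - u) * F t ^ 2)
      (nhdsWithin u (Set.Ioi u)) (nhds 0)) :
    ∀ t ∈ Set.Ioc u T,
      (t - u) * F t ^ 2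
        ≤ (∫ s in u..t, F s ^ 2)
          + 2 * Real.sqrt (∫ s in u..t, (s - u) ^ 2 * F' s ^ 2)
            * Real.sqrt (∫ s in u..t, F s ^ 2) := by
  intro t ht
  obtain ⟨hut, htT⟩ := ht
  -- integrability on [u, t]
  have hsub : Set.uIcc u t ⊆ Set.uIcc u T := by
    rw [Set.uIcc_of_le hut.le, Set.uIcc_of_le huT.le]
    exact Set.Icc_subset_Icc le_rfl htT
  have hint1t : IntervalIntegrable (fun s => F s ^ 2) volume u t :=
    hint1.mono_set hsub
  have hint2t : IntervalIntegrable (fun s => (s - u) ^ 2 * F' s ^ 2) volume u t :=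
    hint2.mono_set hsub
  set RHS := (∫ s in u..t, F s ^ 2)
      + 2 * Real.sqrt (∫ s in u..t, (s - u) ^ 2 * F' s ^ 2)
        * Real.sqrt (∫ s in u..t, F s ^ 2) with hRHS
  -- F is continuous on Ioc u T
  have hFc : ContinuousOn F (Set.Ioc u T) := fun s hs =>
    ((hF s hs).continuousAt).continuousWithinAt
  -- key estimate for ε ∈ Ioc u t
  have key : ∀ ε ∈ Set.Ioc u t, (t - u) * F t ^ 2 - RHS ≤ (ε - u) * F ε ^ 2 := by
    intro ε hε
    obtain ⟨huε, hεt⟩ := hε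
    have hIcc : Set.Icc ε t ⊆ Set.Ioc u T :=
      fun s hs => ⟨lt_of_lt_of_le huε hs.1, le_trans hs.2 htT⟩
    have hFcc : ContinuousOn F (Set.Icc ε t) := hFc.mono hIcc
    have hF'cc : ContinuousOn F' (Set.Icc ε t) := hF'c.mono hIcc
    have hwF'c : ContinuousOn (fun s => (s - u) * F' s) (Set.Icc ε t) :=
      (continuousOn_id.sub continuousOn_const).mul hF'cc
    have hUIcc : Set.uIcc ε t = Set.Icc ε t := Set.uIcc_of_le hεt
    -- derivative of G s = (s - u) * F s ^ 2
    have hderiv : ∀ s ∈ Set.uIcc ε t,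
        HasDerivAt (fun s => (s - u) * F s ^ 2)
          (F s ^ 2 + 2 * ((s - u) * F' s) * F s) s := by
      intro s hs
      rw [hUIcc] at hs
      have h1 : HasDerivAt (fun s : ℝ => s - u) 1 s :=
        (hasDerivAt_id s).sub_const u
      have h2 : HasDerivAt (fun s => F s ^ 2) (2 * F s * F' s) s := by
        simpa using ((hF s (hIcc hs)).fun_pow 2)
      have : HasDerivAt (fun i => (i - u) * F i ^ 2)
          (1 * F s ^ 2 + (s - u) * (2 * F s * F' s)) s := h1.mul h2
      convert this using 1
      ring
    have hgint : IntervalIntegrable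
        (fun s => F s ^ 2 + 2 * ((s - u) * F' s) * F s) volume ε t := by
      apply ContinuousOn.intervalIntegrable
      rw [hUIcc]
      exact (hFcc.pow 2).add (((continuousOn_const.mul hwF'c)).mul hFcc)
    have hFTC := intervalIntegral.integral_eq_sub_of_hasDerivAt hderiv hgint
    -- split the integral
    have hsplit : (∫ s in ε..t, F s ^ 2 + 2 * ((s - u) * F' s) * F s)
        = (∫ s in ε..t, F s ^ 2) + 2 * ∫ s in ε..t, ((s - u) * F' s) * F s := by
      rw [intervalIntegral.integral_add
        (ContinuousOn.intervalIntegrable (by rw [hUIcc]; exact hFcc.pow 2))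
        (ContinuousOn.intervalIntegrable
          (by rw [hUIcc]; exact (continuousOn_const.mul hwF'c).mul hFcc))]
      congr 1
      rw [← intervalIntegral.integral_const_mul]
      congr 1; ext s; ring
    -- monotonicity of nonneg integrals: ∫_ε^t ≤ ∫_u^t
    have hmono1 : (∫ s in ε..t, F s ^ 2) ≤ ∫ s in u..t, F s ^ 2 := by
      have h1 : IntervalIntegrable (fun s => F s ^ 2) volume u ε :=
        hint1t.mono_set (by
          rw [Set.uIcc_of_le huε.le, Set.uIcc_of_le hut.le]
          exact Set.Icc_subset_Icc le_rfl hεt)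
      have h2 : IntervalIntegrable (fun s => F s ^ 2) volume ε t :=
        hint1t.mono_set (by
          rw [hUIcc, Set.uIcc_of_le hut.le]
          exact Set.Icc_subset_Icc huε.le le_rfl)
      have := intervalIntegral.integral_add_adjacent_intervals h1 h2
      have hnn : 0 ≤ ∫ s in u..ε, F s ^ 2 :=
        intervalIntegral.integral_nonneg huε.le (fun s _ => sq_nonneg _)
      linarith
    have hεsq : (∫ s in ε..t, ((s - u) * F' s) ^ 2)
        ≤ ∫ s in u..t, (s - u) ^ 2 * F' s ^ 2 := by
      have heq : (∫ s in ε..t, ((s - u) * F' s) ^ 2)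
          = ∫ s in ε..t, (s - u) ^ 2 * F' s ^ 2 := by
        congr 1; ext s; ring
      rw [heq]
      have h1 : IntervalIntegrable (fun s => (s - u) ^ 2 * F' s ^ 2) volume u ε :=
        hint2t.mono_set (by
          rw [Set.uIcc_of_le huε.le, Set.uIcc_of_le hut.le]
          exact Set.Icc_subset_Icc le_rfl hεt)
      have h2 : IntervalIntegrable (fun s => (s - u) ^ 2 * F' s ^ 2) volume ε t :=
        hint2t.mono_set (by
          rw [hUIcc, Set.uIcc_of_le hut.le]
          exact Set.Icc_subset_Icc huε.le le_rfl)
      have := intervalIntegral.integral_add_adjacent_intervals h1 h2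
      have hnn : 0 ≤ ∫ s in u..ε, (s - u) ^ 2 * F' s ^ 2 :=
        intervalIntegral.integral_nonneg huε.le
          (fun s _ => mul_nonneg (sq_nonneg _) (sq_nonneg _))
      linarith
    -- Cauchy–Schwarz
    have hCS := cs_interval hεt hwF'c hFcc
    have hsqrt1 : Real.sqrt (∫ s in ε..t, ((s - u) * F' s) ^ 2)
        ≤ Real.sqrt (∫ s in u..t, (s - u) ^ 2 * F' s ^ 2) :=
      Real.sqrt_le_sqrt hεsq
    have hsqrt2 : Real.sqrt (∫ s in ε..t, F s ^ 2)
        ≤ Real.sqrt (∫ s in u..t, F s ^ 2) :=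
      Real.sqrt_le_sqrt hmono1
    have hcs2 : (∫ s in ε..t, ((s - u) * F' s) * F s)
        ≤ Real.sqrt (∫ s in u..t, (s - u) ^ 2 * F' s ^ 2)
          * Real.sqrt (∫ s in u..t, F s ^ 2) := by
      refine le_trans hCS (mul_le_mul hsqrt1 hsqrt2 (Real.sqrt_nonneg _)
        (Real.sqrt_nonneg _))
    have : (t - u) * F t ^ 2 - (ε - u) * F ε ^ 2 ≤ RHS := by
      rw [← hFTC, hsplit, hRHS]
      nlinarith [Real.sqrt_nonneg (∫ s in u..t, (s - u) ^ 2 * F' s ^ 2),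
        Real.sqrt_nonneg (∫ s in u..t, F s ^ 2)]
    linarith
  -- take the limit ε → u⁺
  have hne : (nhdsWithin u (Set.Ioi u)).NeBot := nhdsGT_neBot u
  have hev : ∀ᶠ ε in nhdsWithin u (Set.Ioi u),
      (t - u) * F t ^ 2 - RHS ≤ (ε - u) * F ε ^ 2 := by
    filter_upwards [Ioc_mem_nhdsGT_of_mem (Set.left_mem_Ico.mpr hut)] with ε hε
    exact key ε hε
  have := ge_of_tendsto hlim hev
  linarith
end

section
/- Let u ≤ a < b and let ψ : [a, b] → ℝ be continuously differentiable. Then for every t ∈ [a, b], (t − u)·ψ(t)² ≤ (a − u)·ψ(a)² + ∫_a^t ( (s − u)·ψ'(s) + ψ(s) )² ds. -/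
/-- For `u ≤ a < b` and `ψ ∈ C¹([a, b])`, for every `t ∈ [a, b]`:
`(t − u)ψ(t)² ≤ (a − u)ψ(a)² + ∫_a^t ((s − u)ψ'(s) + ψ(s))² ds`. -/
theorem stmt_18 (u a b : ℝ) (hua : u ≤ a) (hab : a < b) (ψ ψ' : ℝ → ℝ)
    (hψ : ∀ s ∈ Set.Icc a b, HasDerivWithinAt ψ (ψ' s) (Set.Icc a b) s)
    (hψ'c : ContinuousOn ψ' (Set.Icc a b)) :
    ∀ t ∈ Set.Icc a b,
      (t - u) * ψ t ^ 2
        ≤ (a - u) * ψ a ^ 2 + ∫ s in a..t, ((s - u) * ψ' s + ψ s) ^ 2 := by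
  intro t ht
  obtain ⟨hat, htb⟩ := ht
  set F : ℝ → ℝ := fun s => (s - u) * ψ s ^ 2 with hF
  set F' : ℝ → ℝ := fun s => ψ s ^ 2 + (s - u) * (2 * ψ s * ψ' s) with hF'
  have hψc : ContinuousOn ψ (Set.Icc a b) := fun s hs => (hψ s hs).continuousWithinAt
  have hderiv : ∀ s ∈ Set.Icc a b, HasDerivWithinAt F (F' s) (Set.Icc a b) s := by
    intro s hs
    have h2 : HasDerivWithinAt (fun x => ψ x ^ 2) (2 * ψ s * ψ' s) (Set.Icc a b) s := by
      have h : HasDerivWithinAt (fun x => ψ x * ψ x) (ψ' s * ψ s + ψ s * ψ' s)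
          (Set.Icc a b) s := (hψ s hs).mul (hψ s hs)
      convert h using 1
      · ext x; ring
      · ring
    have h1 : HasDerivWithinAt (fun x : ℝ => x - u) 1 (Set.Icc a b) s :=
      ((hasDerivAt_id s).sub_const u).hasDerivWithinAt
    have : HasDerivWithinAt (fun x => (x - u) * ψ x ^ 2)
        (1 * ψ s ^ 2 + (s - u) * (2 * ψ s * ψ' s)) (Set.Icc a b) s := h1.mul h2
    convert this using 1
    simp only [hF']; ring
  have hF'c : ContinuousOn F' (Set.Icc a b) :=
    (hψc.pow 2).add ((continuousOn_id.sub continuousOn_const).mul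
      ((continuousOn_const.mul hψc).mul hψ'c))
  have hsub : Set.Icc a t ⊆ Set.Icc a b := Set.Icc_subset_Icc le_rfl htb
  have hGc : ContinuousOn (fun s => ((s - u) * ψ' s + ψ s) ^ 2) (Set.Icc a b) :=
    (((continuousOn_id.sub continuousOn_const).mul hψ'c).add hψc).pow 2
  have hF'int : IntervalIntegrable F' MeasureTheory.volume a t :=
    (hF'c.mono (by rw [Set.uIcc_of_le hat]; exact hsub)).intervalIntegrable
  have hGint : IntervalIntegrable (fun s => ((s - u) * ψ' s + ψ s) ^ 2)
      MeasureTheory.volume a t :=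
    (hGc.mono (by rw [Set.uIcc_of_le hat]; exact hsub)).intervalIntegrable
  have hftc : (∫ s in a..t, F' s) = F t - F a := by
    have hFc : ContinuousOn F (Set.Icc a t) :=
      ((continuousOn_id.sub continuousOn_const).mul (hψc.pow 2)).mono hsub
    apply intervalIntegral.integral_eq_sub_of_hasDeriv_right_of_le hat hFc ?_ hF'int
    · intro x hx
      have hxb : x ∈ Set.Ioo a b := ⟨hx.1, lt_of_lt_of_le hx.2 htb⟩
      exact ((hderiv x (Set.Ioo_subset_Icc_self hxb)).hasDerivAt
        (Icc_mem_nhds hxb.1 hxb.2)).hasDerivWithinAt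
  have hmono : (∫ s in a..t, F' s) ≤ ∫ s in a..t, ((s - u) * ψ' s + ψ s) ^ 2 := by
    apply intervalIntegral.integral_mono_on hat hF'int hGint
    intro s hs
    simp only [hF']
    nlinarith [sq_nonneg ((s - u) * ψ' s)]
  simp only [hF] at hftc
  linarith [hftc ▸ hmono]
end
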